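/- arXiv:math/9907060 — 2 statements merged into one kernel-verified Lean document; each statement's English description precedes it below -/
import Mathlib

section
/- Let V be an n×n matrix with integer entries and det V ≠ 0, and let c_1, …, c_n ∈ ℂ* = ℂ ∖ {0}. Then the binomial system ∏_{j=1}^{n} x_j^{V_{ij}} = c_i (i = 1, …, n), where the exponentiation x_j^{V_{ij}} is the integer power of the nonzero complex number x_j, has exactly |det V| solutions x ∈ (ℂ*)ⁿ; i.e., the solution set is finite of cardinality the absolute value of det V. -/
open Matrix

namespace BinomialAux

variable {n : ℕ}

/-- The torus endomorphism induced by an integer matrix. -/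
def torusHom (M : Matrix (Fin n) (Fin n) ℤ) : (Fin n → ℂˣ) →* (Fin n → ℂˣ) where
  toFun x := fun i => ∏ j, x j ^ M i j
  map_one' := by funext i; simp
  map_mul' x y := by
    funext i
    simp [Pi.mul_apply, mul_zpow, Finset.prod_mul_distrib]

@[simp] lemma torusHom_apply (M : Matrix (Fin n) (Fin n) ℤ) (x : Fin n → ℂˣ) (i : Fin n) :
    torusHom M x i = ∏ j, x j ^ M i j := rfl

lemma zpow_sum' (x : ℂˣ) (f : Fin n → ℤ) : x ^ (∑ j, f j) = ∏ j, x ^ f j := by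
  classical
  induction (Finset.univ : Finset (Fin n)) using Finset.induction with
  | empty => simp
  | @insert a s h ih => simp [Finset.sum_insert h, Finset.prod_insert h, _root_.zpow_add, ih]

lemma torusHom_mul (M N : Matrix (Fin n) (Fin n) ℤ) (x : Fin n → ℂˣ) :
    torusHom (M * N) x = torusHom M (torusHom N x) := by
  funext i
  simp only [torusHom_apply]
  calc ∏ k, x k ^ (M * N) i k
      = ∏ k, ∏ j, x k ^ (N j k * M i j) := by
        refine Finset.prod_congr rfl fun k _ => ?_
        rw [Matrix.mul_apply, ← zpow_sum']
        congr 1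
        exact Finset.sum_congr rfl fun j _ => mul_comm _ _
    _ = ∏ j, ∏ k, x k ^ (N j k * M i j) := Finset.prod_comm
    _ = ∏ j, (∏ k, x k ^ N j k) ^ M i j := by
        refine Finset.prod_congr rfl fun j _ => ?_
        rw [← Finset.prod_zpow]
        exact Finset.prod_congr rfl fun k _ => _root_.zpow_mul _ _ _

lemma torusHom_one (x : Fin n → ℂˣ) : torusHom (1 : Matrix (Fin n) (Fin n) ℤ) x = x := by
  funext i
  classical
  simp only [torusHom_apply, Matrix.one_apply]
  rw [Finset.prod_eq_single i (by intro j _ hj; simp [hj.symm]) (by simp)]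
  simp

lemma torusHom_diagonal (d : Fin n → ℤ) (x : Fin n → ℂˣ) (i : Fin n) :
    torusHom (Matrix.diagonal d) x i = x i ^ d i := by
  classical
  simp only [torusHom_apply, Matrix.diagonal_apply]
  rw [Finset.prod_eq_single i (by intro j _ hj; simp [hj.symm]) (by simp)]
  simp

/-- The torus automorphism induced by a unimodular integer matrix. -/
noncomputable def torusEquiv (A : Matrix (Fin n) (Fin n) ℤ) (hA : IsUnit A.det) :
    (Fin n → ℂˣ) ≃* (Fin n → ℂˣ) := by
  classical
  haveI := A.invertibleOfIsUnitDet hA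
  exact
  { toFun := torusHom A
    invFun := torusHom (⅟A)
    left_inv := fun x => by rw [← torusHom_mul, invOf_mul_self, torusHom_one]
    right_inv := fun x => by rw [← torusHom_mul, mul_invOf_self, torusHom_one]
    map_mul' := map_mul _ }

@[simp] lemma torusEquiv_apply (A : Matrix (Fin n) (Fin n) ℤ) (hA : IsUnit A.det)
    (x : Fin n → ℂˣ) : torusEquiv A hA x = torusHom A x := rfl

/-- Translating a fiber of a group hom to the kernel. -/
def fiberEquiv {G H : Type*} [CommGroup G] [CommGroup H] (f : G →* H) {c : H} (x₀ : G)
    (h : f x₀ = c) : {x : G | f x = c} ≃ {x : G | f x = 1} where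
  toFun x := ⟨x₀⁻¹ * x.1, by
    have hx := x.2
    simp only [Set.mem_setOf_eq] at hx ⊢
    rw [_root_.map_mul, map_inv, h, hx, inv_mul_cancel]⟩
  invFun x := ⟨x₀ * x.1, by
    have hx := x.2
    simp only [Set.mem_setOf_eq] at hx ⊢
    rw [_root_.map_mul, h, hx, mul_one]⟩
  left_inv x := by ext; simp
  right_inv x := by ext; simp

lemma one_var (m : ℤ) (hm : m ≠ 0) (w : ℂˣ) :
    {y : ℂˣ | y ^ m = w}.Finite ∧ Nat.card {y : ℂˣ | y ^ m = w} = m.natAbs ∧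
      ∃ y : ℂˣ, y ^ m = w := by
  haveI : NeZero m.natAbs := ⟨Int.natAbs_ne_zero.mpr hm⟩
  -- existence of a solution
  obtain ⟨z, hz⟩ := IsAlgClosed.exists_pow_nat_eq (w : ℂ) (Int.natAbs_pos.mpr hm)
  have hz0 : z ≠ 0 := by
    intro h
    rw [h, zero_pow (Int.natAbs_ne_zero.mpr hm)] at hz
    exact w.ne_zero hz.symm
  have hu : (Units.mk0 z hz0) ^ m.natAbs = w := by
    ext
    push_cast
    exact hz
  have hex : ∃ y : ℂˣ, y ^ m = w := by
    rcases Int.natAbs_eq m with h | h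
    · exact ⟨Units.mk0 z hz0, by rw [h, zpow_natCast, hu]⟩
    · refine ⟨(Units.mk0 z hz0)⁻¹, ?_⟩
      rw [h, _root_.zpow_neg, zpow_natCast, inv_pow, inv_inv, hu]
  obtain ⟨y₀, hy₀⟩ := hex
  -- the kernel is the set of roots of unity
  have hker : {y : ℂˣ | y ^ m = 1} = (rootsOfUnity m.natAbs ℂ : Set ℂˣ) := by
    ext y
    simp only [Set.mem_setOf_eq, SetLike.mem_coe, mem_rootsOfUnity]
    rcases Int.natAbs_eq m with h | h
    · nth_rewrite 1 [h]; rw [zpow_natCast]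
    · nth_rewrite 1 [h]; rw [_root_.zpow_neg, zpow_natCast, inv_eq_one]
  have hkfin : {y : ℂˣ | y ^ m = 1}.Finite := by
    rw [hker]
    haveI : Finite ↥(rootsOfUnity m.natAbs ℂ) := inferInstance
    haveI : Finite ↥((rootsOfUnity m.natAbs ℂ : Subgroup ℂˣ) : Set ℂˣ) := this
    exact Set.toFinite _
  have hkcard : Nat.card {y : ℂˣ | y ^ m = 1} = m.natAbs := by
    rw [hker]
    have : Nat.card (rootsOfUnity m.natAbs ℂ) = m.natAbs := by
      exact Complex.card_rootsOfUnity m.natAbs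
    exact this
  have he := fiberEquiv (zpowGroupHom m (α := ℂˣ)) (c := w) y₀ hy₀
  have hsetc : {x : ℂˣ | zpowGroupHom m x = w} = {y : ℂˣ | y ^ m = w} := rfl
  have hset1 : {x : ℂˣ | zpowGroupHom m x = 1} = {y : ℂˣ | y ^ m = 1} := rfl
  rw [hsetc, hset1] at he
  haveI h1 : Finite ↥{y : ℂˣ | y ^ m = 1} := hkfin.to_subtype
  haveI h2 : Finite ↥{y : ℂˣ | y ^ m = w} := Finite.of_equiv _ he.symm
  exact ⟨Set.finite_coe_iff.mp h2, by rw [Nat.card_congr he, hkcard], ⟨y₀, hy₀⟩⟩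
lemma diag_fiber (d : Fin n → ℤ) (hd : ∀ i, d i ≠ 0) (c : Fin n → ℂˣ) :
    {x : Fin n → ℂˣ | torusHom (Matrix.diagonal d) x = c}.Finite ∧
      Nat.card {x : Fin n → ℂˣ | torusHom (Matrix.diagonal d) x = c} = (∏ i, d i).natAbs := by
  have hset : {x : Fin n → ℂˣ | torusHom (Matrix.diagonal d) x = c} =
      Set.pi Set.univ (fun i => {y : ℂˣ | y ^ d i = c i}) := by
    ext x
    simp only [Set.mem_setOf_eq, Set.mem_pi, Set.mem_univ, true_implies, funext_iff]
    exact forall_congr' fun i => by rw [torusHom_diagonal]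
  rw [hset]
  constructor
  · exact Set.Finite.pi (fun i => (one_var _ (hd i) _).1)
  · rw [Nat.card_congr (Equiv.Set.univPi (fun i => {y : ℂˣ | y ^ d i = c i})), Nat.card_pi]
    have : (∏ i, d i).natAbs = ∏ i, (d i).natAbs := map_prod Int.natAbsHom d Finset.univ
    rw [this]
    exact Finset.prod_congr rfl fun i _ => (one_var _ (hd i) _).2.1

lemma exists_matrix_snf (V : Matrix (Fin n) (Fin n) ℤ) (hV : V.det ≠ 0) :
    ∃ (A B : Matrix (Fin n) (Fin n) ℤ) (d : Fin n → ℤ),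
      IsUnit A.det ∧ IsUnit B.det ∧ V = A * Matrix.diagonal d * B := by
  classical
  set e : Module.Basis (Fin n) ℤ (Fin n → ℤ) := Pi.basisFun ℤ (Fin n) with he
  set φ : (Fin n → ℤ) →ₗ[ℤ] (Fin n → ℤ) := Vᵀ.mulVecLin with hφdef
  have hφ : Function.Injective φ := by
    rw [← LinearMap.ker_eq_bot, Submodule.eq_bot_iff]
    intro x hx
    exact Matrix.eq_zero_of_mulVec_eq_zero (by rwa [Matrix.det_transpose]) hx
  set N : Submodule ℤ (Fin n → ℤ) := LinearMap.range φ with hN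
  set eqN : (Fin n → ℤ) ≃ₗ[ℤ] N := LinearEquiv.ofInjective φ hφ with heqN
  set bV : Module.Basis (Fin n) ℤ N := e.map eqN with hbV
  obtain ⟨m, snf⟩ := N.smithNormalForm e
  have hmn : m = n := by simpa using Fintype.card_congr (Module.Basis.indexEquiv snf.bN bV)
  subst hmn
  have hbij : Function.Bijective snf.f :=
    Finite.injective_iff_bijective.mp snf.f.injective
  set σ : Equiv.Perm (Fin m) := Equiv.ofBijective snf.f hbij with hσ
  set C : Matrix (Fin m) (Fin m) ℤ := snf.bN.toMatrix (fun j => bV j) with hC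
  set P : Matrix (Fin m) (Fin m) ℤ := e.toMatrix (fun j => snf.bM j) with hP
  set D : Matrix (Fin m) (Fin m) ℤ :=
    Matrix.of (fun k i => if k = snf.f i then snf.a i else 0) with hD
  have hCunit : IsUnit C.det := by
    apply IsUnit.of_mul_eq_one (bV.toMatrix (fun j => snf.bN j)).det
    rw [← Matrix.det_mul, Module.Basis.toMatrix_mul_toMatrix_flip, Matrix.det_one]
  have hPunit : IsUnit P.det := by
    apply IsUnit.of_mul_eq_one (snf.bM.toMatrix (fun j => e j)).det
    rw [← Matrix.det_mul, Module.Basis.toMatrix_mul_toMatrix_flip, Matrix.det_one]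
  -- the value of bV
  have hbVval : ∀ j, (bV j : Fin m → ℤ) = fun k => Vᵀ k j := by
    intro j
    rw [hbV, Module.Basis.map_apply, heqN, LinearEquiv.ofInjective_apply, hφdef]
    funext k
    rw [he]
    simp [Matrix.mulVecLin, Pi.basisFun_apply]
  -- expansion of bV in terms of bN
  have hsum : ∀ j, (bV j : Fin m → ℤ) = ∑ i, C i j • ((snf.bN i : Fin m → ℤ)) := by
    intro j
    have h1 : ∑ i, C i j • snf.bN i = bV j := snf.bN.sum_toMatrix_smul_self (fun j => bV j) j
    rw [← h1]
    push_cast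
    simp
  have hkey : Vᵀ = P * D * C := by
    ext k j
    have h2 : Vᵀ k j = ∑ i, C i j * (snf.a i * snf.bM (snf.f i) k) := by
      have := congrFun (hsum j) k
      rw [hbVval j] at this
      simpa [snf.snf] using this
    rw [h2, Matrix.mul_apply]
    refine Finset.sum_congr rfl fun i _ => ?_
    have h3 : (P * D) k i = snf.bM (snf.f i) k * snf.a i := by
      rw [Matrix.mul_apply]
      rw [Finset.sum_eq_single (snf.f i) (by intro l _ hl; simp [hD, hl]) (by simp)]
      simp [hD, hP, Module.Basis.toMatrix_apply, he]
    rw [h3]; ring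
  -- decompose D
  have hσf : ∀ i, σ i = snf.f i := fun i => rfl
  have hPm : ∀ l i, Equiv.Perm.permMatrix ℤ σ.symm l i = if i = σ.symm l then 1 else 0 := by
    intro l i
    simp only [Equiv.Perm.permMatrix, PEquiv.toMatrix_apply, Equiv.toPEquiv_apply,
      Option.mem_def, Option.some.injEq]
    by_cases h : i = σ.symm l
    · simp [h]
    · simp [h, Ne.symm h]
  have hDfact : D = Matrix.diagonal (fun k => snf.a (σ.symm k)) *
      (Equiv.Perm.permMatrix ℤ σ.symm) := by
    ext k i
    rw [Matrix.mul_apply]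
    rw [Finset.sum_eq_single k (by
      intro l _ hl
      rw [Matrix.diagonal_apply_ne' _ hl, zero_mul]) (by simp)]
    rw [hPm, Matrix.diagonal_apply_eq]
    by_cases h : k = snf.f i
    · have hsk : σ.symm k = i := by rw [Equiv.symm_apply_eq, hσf]; exact h
      rw [if_pos hsk.symm, hsk, mul_one]
      simp [hD, h]
    · have hsk : ¬ (i = σ.symm k) := by
        intro hi
        exact h (by rw [hi, ← hσf, Equiv.apply_symm_apply])
      rw [if_neg hsk, mul_zero]
      simp [hD, h]
  refine ⟨Cᵀ * (Equiv.Perm.permMatrix ℤ σ.symm)ᵀ, Pᵀ, fun k => snf.a (σ.symm k), ?_, ?_, ?_⟩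
  · rw [Matrix.det_mul, Matrix.det_transpose, Matrix.det_transpose, Matrix.det_permutation]
    exact hCunit.mul (Units.isUnit _)
  · rw [Matrix.det_transpose]; exact hPunit
  · have := congrArg Matrix.transpose hkey
    rw [Matrix.transpose_transpose] at this
    rw [this, hDfact]
    simp only [Matrix.transpose_mul, Matrix.diagonal_transpose]
    noncomm_ring

/-- Preimage of a set under an equivalence. -/
def preimageEquiv {α β : Type*} (e : α ≃ β) (t : Set β) : (⇑e ⁻¹' t) ≃ t where
  toFun x := ⟨e x.1, x.2⟩
  invFun y := ⟨e.symm y.1, by simp only [Set.mem_preimage, Equiv.apply_symm_apply]; exact y.2⟩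
  left_inv x := by ext; simp
  right_inv y := by ext; simp

end BinomialAux

/-- A binomial system `∏ⱼ xⱼ^{Vᵢⱼ} = cᵢ` with integer exponent matrix `V` of
nonzero determinant and nonzero right-hand sides has exactly `|det V|`
solutions in the torus `(ℂ*)ⁿ`. -/
theorem binomial_system_solution_count
    (n : ℕ) (V : Matrix (Fin n) (Fin n) ℤ) (hV : V.det ≠ 0)
    (c : Fin n → ℂ) (hc : ∀ i, c i ≠ 0) :
    (Set.Finite {x : Fin n → ℂ |
        (∀ j, x j ≠ 0) ∧ ∀ i, (∏ j, x j ^ (V i j)) = c i}) ∧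
    Set.ncard {x : Fin n → ℂ |
        (∀ j, x j ≠ 0) ∧ ∀ i, (∏ j, x j ^ (V i j)) = c i} = V.det.natAbs := by
  classical
  obtain ⟨A, B, d, hA, hB, hfact⟩ := BinomialAux.exists_matrix_snf V hV
  have hdetd : (∏ i, d i) ≠ 0 := by
    intro h
    apply hV
    rw [hfact, Matrix.det_mul, Matrix.det_mul, Matrix.det_diagonal, h, mul_zero, zero_mul]
  have hd : ∀ i, d i ≠ 0 := fun i hi => hdetd (Finset.prod_eq_zero (Finset.mem_univ i) hi)
  set cu : Fin n → ℂˣ := fun i => Units.mk0 (c i) (hc i) with hcu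
  set eA := BinomialAux.torusEquiv A hA with heA
  set eB := BinomialAux.torusEquiv B hB with heB
  set T : Set (Fin n → ℂˣ) :=
    {x | BinomialAux.torusHom (Matrix.diagonal d) x = eA.symm cu} with hT
  set U : Set (Fin n → ℂˣ) := {x | BinomialAux.torusHom V x = cu} with hU
  have hUT : U = ⇑eB.toEquiv ⁻¹' T := by
    ext x
    simp only [hU, hT, Set.mem_setOf_eq, Set.mem_preimage, MulEquiv.coe_toEquiv]
    have hVx : BinomialAux.torusHom V x =
        eA (BinomialAux.torusHom (Matrix.diagonal d) (eB x)) := by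
      rw [hfact, BinomialAux.torusHom_mul, BinomialAux.torusHom_mul]
      rfl
    rw [hVx]
    have hbe : eB.toEquiv x = eB x := rfl
    rw [hbe]
    constructor
    · intro h
      rw [← h, MulEquiv.symm_apply_apply]
    · intro h
      rw [h, MulEquiv.apply_symm_apply]
  obtain ⟨hTfin, hTcard⟩ := BinomialAux.diag_fiber d hd (eA.symm cu)
  have hUfin : U.Finite := by
    rw [hUT]
    exact hTfin.preimage (Equiv.injective _).injOn
  have hUcard : Nat.card U = (∏ i, d i).natAbs := by
    rw [hUT, ← hTcard]
    exact Nat.card_congr (BinomialAux.preimageEquiv eB.toEquiv T)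
  have hdet : V.det.natAbs = (∏ i, d i).natAbs := by
    rw [hfact, Matrix.det_mul, Matrix.det_mul, Matrix.det_diagonal, Int.natAbs_mul,
      Int.natAbs_mul, Int.natAbs_of_isUnit hA, Int.natAbs_of_isUnit hB, one_mul, mul_one]
  -- translate membership
  have hmem : ∀ (x : Fin n → ℂˣ), (BinomialAux.torusHom V x = cu) ↔
      (∀ i, ∏ j, (x j : ℂ) ^ V i j = c i) := by
    intro x
    rw [funext_iff]
    refine forall_congr' fun i => ?_
    rw [Units.ext_iff]
    have hcoe : ((BinomialAux.torusHom V x i : ℂˣ) : ℂ) = ∏ j, (x j : ℂ) ^ V i j := by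
      rw [BinomialAux.torusHom_apply, ← Units.coeHom_apply,
        map_prod (Units.coeHom ℂ) _ Finset.univ]
      simp only [Units.coeHom_apply]
      exact Finset.prod_congr rfl fun j _ => Units.val_zpow_eq_zpow_val _ _
    rw [hcoe]
    simp [hcu]
  set S : Set (Fin n → ℂ) := {x : Fin n → ℂ |
      (∀ j, x j ≠ 0) ∧ ∀ i, (∏ j, x j ^ (V i j)) = c i} with hS
  have eSU : ↥S ≃ ↥U := by
    refine
      { toFun := fun x => ⟨fun j => Units.mk0 (x.1 j) (x.2.1 j), ?_⟩
        invFun := fun u => ⟨fun j => (u.1 j : ℂ), ?_, ?_⟩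
        left_inv := fun x => ?_
        right_inv := fun u => ?_ }
    · rw [hU, Set.mem_setOf_eq, hmem]
      intro i
      simpa using x.2.2 i
    · intro j
      exact (u.1 j).ne_zero
    · intro i
      exact (hmem u.1).mp u.2 i
    · ext j
      simp
    · ext j
      simp
  haveI hUsub : Finite ↥U := hUfin.to_subtype
  haveI hSsub : Finite ↥S := Finite.of_equiv _ eSU.symm
  constructor
  · exact Set.finite_coe_iff.mp hSsub
  · rw [← Nat.card_coe_set_eq, Nat.card_congr eSU, hUcard, hdet]
end

section
/- Let S = (S_{i,k}), i = 1,…,n, k = 1,…,d_i, be a set structure, where each S_{i,k} ⊆ {1,…,n}, and let B_S be the number of tuples (k_1, …, k_n) with 1 ≤ k_i ≤ d_i such that the family (S_{1,k_1}, …, S_{n,k_n}) satisfies Hall's condition: for every subset I ⊆ {1,…,n}, the union ∪_{i∈I} S_{i,k_i} has at least |I| elements. Consider the linear-product system with polynomials p_i(x) = ∏_{k=1}^{d_i} ( Σ_{j ∈ S_{i,k}} c_{i,k,j} x_j + c_{i,k,0} ), whose coefficients are the complex parameters c_{i,k,j}. Then there exists a nonzero polynomial G in these parameters such that for every choice of coefficients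 c with G(c) ≠ 0, the system p_1(x) = ⋯ = p_n(x) = 0 has exactly B_S solutions in ℂⁿ, and every such solution is nonsingular, i.e., the n×n Jacobian matrix (∂p_i/∂x_j) evaluated at it is invertible. (Except for a choice of coefficients belonging to an algebraic set, there are exactly B_S regular solutions to a random linear-product system based on the set structure S.) -/
/-- The linear-product polynomial `pᵢ(x) = ∏ₖ (Σ_{j ∈ S i k} c_{i,k,j} xⱼ + c_{i,k,0})`
based on the set structure `S`, with coefficient parameters `c`. -/
noncomputable def linProdPoly {n : ℕ} (d : Fin n → ℕ)
    (S : (i : Fin n) → Fin (d i) → Finset (Fin n))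
    (c : (Σ i : Fin n, Σ k : Fin (d i), Option {j // j ∈ S i k}) → ℂ)
    (i : Fin n) : MvPolynomial (Fin n) ℂ :=
  ∏ k : Fin (d i),
    (∑ j ∈ (S i k).attach, MvPolynomial.C (c ⟨i, k, some j⟩) * MvPolynomial.X j.1
      + MvPolynomial.C (c ⟨i, k, none⟩))

open MvPolynomial Matrix

namespace LPS

variable {n : ℕ} {d : Fin n → ℕ} (S : (i : Fin n) → Fin (d i) → Finset (Fin n))

abbrev Var (S : (i : Fin n) → Fin (d i) → Finset (Fin n)) :=
  (Σ i : Fin n, Σ k : Fin (d i), Option {j // j ∈ S i k})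

/-- value of the k-th linear factor of row i -/
noncomputable def Lval (c : Var S → ℂ) (x : Fin n → ℂ) (i : Fin n) (k : Fin (d i)) : ℂ :=
  (∑ j ∈ (S i k).attach, c ⟨i, k, some j⟩ * x j.1) + c ⟨i, k, none⟩

def Hall (t : (i : Fin n) → Fin (d i)) : Prop :=
  ∀ I : Finset (Fin n), I.card ≤ (I.biUnion (fun i => S i (t i))).card

noncomputable def Amat (c : Var S → ℂ) (t : (i : Fin n) → Fin (d i)) :
    Matrix (Fin n) (Fin n) ℂ :=
  Matrix.of fun i j => if h : j ∈ S i (t i) then c ⟨i, t i, some ⟨j, h⟩⟩ else 0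

noncomputable def bvec (c : Var S → ℂ) (t : (i : Fin n) → Fin (d i)) : Fin n → ℂ :=
  fun i => c ⟨i, t i, none⟩

noncomputable def Apoly (t : (i : Fin n) → Fin (d i)) :
    Matrix (Fin n) (Fin n) (MvPolynomial (Var S) ℂ) :=
  Matrix.of fun i j => if h : j ∈ S i (t i) then X ⟨i, t i, some ⟨j, h⟩⟩ else 0

noncomputable def Dpoly (t : (i : Fin n) → Fin (d i)) : MvPolynomial (Var S) ℂ :=
  (Apoly S t).det

noncomputable def Npoly (t : (i : Fin n) → Fin (d i)) (j : Fin n) : MvPolynomial (Var S) ℂ :=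
  ((Apoly S t).updateCol j (fun i => - X ⟨i, t i, none⟩)).det

lemma eval_Apoly (c : Var S → ℂ) (t : (i : Fin n) → Fin (d i)) :
    (Apoly S t).map (eval c) = Amat S c t := by
  ext i j
  simp only [Apoly, Amat, Matrix.map_apply, Matrix.of_apply]
  split <;> simp

lemma eval_Dpoly (c : Var S → ℂ) (t : (i : Fin n) → Fin (d i)) :
    eval c (Dpoly S t) = (Amat S c t).det := by
  rw [Dpoly, RingHom.map_det, RingHom.mapMatrix_apply, eval_Apoly]

lemma eval_Npoly (c : Var S → ℂ) (t : (i : Fin n) → Fin (d i)) (j : Fin n) :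
    eval c (Npoly S t j) = Matrix.cramer (Amat S c t) (fun i => - bvec S c t i) j := by
  rw [Npoly, RingHom.map_det, RingHom.mapMatrix_apply, Matrix.cramer_apply]
  congr 1
  ext i j'
  by_cases h : j' = j
  · subst h; simp [Matrix.updateCol_self, bvec]
  · rw [Matrix.map_apply, Matrix.updateCol_ne h, Matrix.updateCol_ne h]
    have := congrFun (congrFun (eval_Apoly S c t) i) j'
    simpa [Matrix.map_apply] using this

/-- the generic solution attached to a tuple t -/
noncomputable def xsol (c : Var S → ℂ) (t : (i : Fin n) → Fin (d i)) : Fin n → ℂ :=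
  ((Amat S c t).det)⁻¹ • Matrix.cramer (Amat S c t) (fun i => - bvec S c t i)

lemma mulVec_xsol (c : Var S → ℂ) (t : (i : Fin n) → Fin (d i))
    (h : (Amat S c t).det ≠ 0) :
    (Amat S c t) *ᵥ (xsol S c t) = fun i => - bvec S c t i := by
  rw [xsol, Matrix.mulVec_smul, Matrix.mulVec_cramer, smul_smul, inv_mul_cancel₀ h, one_smul]


lemma eval_linProdPoly (c : Var S → ℂ) (x : Fin n → ℂ) (i : Fin n) :
    eval x (linProdPoly d S c i) = ∏ k : Fin (d i), Lval S c x i k := by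
  rw [linProdPoly, map_prod]
  refine Finset.prod_congr rfl fun k _ => ?_
  simp [Lval, eval_C, eval_X]

/-- sum over a dite indexed over all of Fin n equals attach-sum -/
lemma sum_dite_attach {s : Finset (Fin n)} (f : (j : Fin n) → j ∈ s → ℂ) :
    (∑ j : Fin n, if h : j ∈ s then f j h else 0) = ∑ j ∈ s.attach, f j.1 j.2 := by
  rw [← Finset.sum_filter_add_sum_filter_not Finset.univ (· ∈ s)]
  have h2 : (∑ j ∈ Finset.univ.filter (¬ · ∈ s), if h : j ∈ s then f j h else 0) = 0 := by
    refine Finset.sum_eq_zero fun j hj => ?_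
    rw [Finset.mem_filter] at hj
    exact dif_neg hj.2
  rw [h2, add_zero]
  have h3 : Finset.univ.filter (· ∈ s) = s := by ext j; simp
  rw [h3, ← Finset.sum_attach s (fun j => if h : j ∈ s then f j h else 0)]
  exact Finset.sum_congr rfl fun j _ => dif_pos j.2

lemma Lval_eq_mulVec (c : Var S → ℂ) (x : Fin n → ℂ) (t : (i : Fin n) → Fin (d i)) (i : Fin n) :
    Lval S c x i (t i) = (Amat S c t *ᵥ x) i + bvec S c t i := by
  rw [Lval, bvec, Matrix.mulVec]
  congr 1
  rw [dotProduct]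
  rw [show (∑ j : Fin n, Amat S c t i j * x j)
      = ∑ j : Fin n, if h : j ∈ S i (t i) then c ⟨i, t i, some ⟨j, h⟩⟩ * x j else 0 from
    Finset.sum_congr rfl fun j _ => by by_cases h : j ∈ S i (t i) <;> simp [Amat, h]]
  exact (sum_dite_attach (fun j h => c ⟨i, t i, some ⟨j, h⟩⟩ * x j)).symm

/-- uniqueness: solutions of the t-linear system equal xsol when det ≠ 0 -/
lemma eq_xsol (c : Var S → ℂ) (t : (i : Fin n) → Fin (d i)) (h : (Amat S c t).det ≠ 0)
    {x : Fin n → ℂ} (hx : ∀ i, Lval S c x i (t i) = 0) : x = xsol S c t := by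
  have h1 : Amat S c t *ᵥ x = Amat S c t *ᵥ xsol S c t := by
    rw [mulVec_xsol S c t h]
    ext i
    have := hx i
    rw [Lval_eq_mulVec] at this
    exact eq_neg_of_add_eq_zero_left this
  have h2 : Amat S c t *ᵥ (x - xsol S c t) = 0 := by
    rw [Matrix.mulVec_sub, h1, sub_self]
  have := Matrix.eq_zero_of_mulVec_eq_zero h h2
  ext i; exact sub_eq_zero.mp (congrFun this i)

lemma xsol_isSolution (c : Var S → ℂ) (t : (i : Fin n) → Fin (d i))
    (h : (Amat S c t).det ≠ 0) (i : Fin n) : Lval S c (xsol S c t) i (t i) = 0 := by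
  rw [Lval_eq_mulVec, mulVec_xsol S c t h]
  ring


lemma det_ite_ne_zero {R' : Type*} [DecidableEq R'] [Fintype R'] (π : Equiv.Perm R') :
    (Matrix.of fun i j => if j = π i then (1:ℂ) else 0).det ≠ 0 := by
  have h : (Matrix.of fun i j => if j = π i then (1:ℂ) else 0) = π.permMatrix ℂ := by
    ext i j
    simp [Equiv.Perm.permMatrix, PEquiv.toMatrix_apply, Equiv.toPEquiv_apply, Option.mem_def,
      eq_comm]
  rw [h, Matrix.det_permutation]
  rcases Int.units_eq_one_or (Equiv.Perm.sign π) with h1 | h1 <;> rw [h1] <;> norm_num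

lemma Dpoly_ne_zero (t : (i : Fin n) → Fin (d i)) (ht : Hall S t) : Dpoly S t ≠ 0 := by
  classical
  obtain ⟨σ, hσinj, hσmem⟩ :=
    (Finset.all_card_le_biUnion_card_iff_exists_injective (fun i => S i (t i))).mp ht
  let π : Equiv.Perm (Fin n) := Equiv.ofBijective σ (Finite.injective_iff_bijective.mp hσinj)
  let c : Var S → ℂ := fun v => match v with
    | ⟨i, ⟨k, some j⟩⟩ => if k = t i ∧ j.1 = σ i then 1 else 0
    | ⟨_, ⟨_, none⟩⟩ => 0
  have hA : Amat S c t = Matrix.of fun i j => if j = π i then (1:ℂ) else 0 := by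
    ext i j
    by_cases h : j ∈ S i (t i)
    · simp only [Amat, Matrix.of_apply, dif_pos h]
      show (if t i = t i ∧ j = σ i then (1:ℂ) else 0) = _
      simp [π, Equiv.ofBijective]
    · have hne : j ≠ σ i := fun he => h (he ▸ hσmem i)
      simp [Amat, h, π, Equiv.ofBijective, hne]
  have hd : (Amat S c t).det ≠ 0 := hA ▸ det_ite_ne_zero π
  rw [← eval_Dpoly] at hd
  exact fun h0 => hd (by rw [h0, map_zero])


lemma pderiv_finset_prod {ι : Type*} [DecidableEq ι] (s : Finset ι)
    (f : ι → MvPolynomial (Fin n) ℂ) (j : Fin n) :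
    pderiv j (∏ i ∈ s, f i) = ∑ i ∈ s, (∏ i' ∈ s.erase i, f i') * pderiv j (f i) := by
  induction s using Finset.induction_on with
  | empty => simp
  | insert a s ha ih =>
    rw [Finset.prod_insert ha, pderiv_mul, ih, Finset.sum_insert ha, Finset.erase_insert ha,
      Finset.mul_sum]
    have h2 : ∀ i ∈ s, (∏ i' ∈ (insert a s).erase i, f i') * pderiv j (f i)
        = f a * ((∏ i' ∈ s.erase i, f i') * pderiv j (f i)) := by
      intro i hi
      have hai : a ≠ i := fun he => ha (by rw [he]; exact hi)
      rw [Finset.erase_insert_of_ne hai,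
        Finset.prod_insert (fun hmem => ha (Finset.mem_of_mem_erase hmem)), mul_assoc]
    rw [Finset.sum_congr rfl h2]
    ring

noncomputable def entry (c : Var S → ℂ) (i : Fin n) (k : Fin (d i)) (j : Fin n) : ℂ :=
  if h : j ∈ S i k then c ⟨i, k, some ⟨j, h⟩⟩ else 0

lemma Amat_entry (c : Var S → ℂ) (t : (i : Fin n) → Fin (d i)) (i j : Fin n) :
    Amat S c t i j = entry S c i (t i) j := rfl

lemma sum_attach_ite {M : Type*} [AddCommMonoid M] {s : Finset (Fin n)} (j : Fin n)
    (f : {x // x ∈ s} → M) :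
    (∑ j' ∈ s.attach, if j'.1 = j then f j' else 0) = if h : j ∈ s then f ⟨j, h⟩ else 0 := by
  by_cases h : j ∈ s
  · rw [dif_pos h]
    rw [Finset.sum_eq_single ⟨j, h⟩]
    · rw [if_pos rfl]
    · intro b _ hb
      exact if_neg fun he => hb (Subtype.ext he)
    · intro hm; exact absurd (Finset.mem_attach _ _) hm
  · rw [dif_neg h]
    exact Finset.sum_eq_zero fun j' _ => if_neg fun he => h (by rw [← he]; exact j'.2)

lemma pderiv_factor (c : Var S → ℂ) (i : Fin n) (k : Fin (d i)) (j : Fin n) :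
    pderiv j ((∑ j' ∈ (S i k).attach, C (c ⟨i, k, some j'⟩) * X j'.1)
        + C (c ⟨i, k, none⟩)) = C (entry S c i k j) := by
  rw [map_add, pderiv_C, add_zero, map_sum]
  have h1 : ∀ j' ∈ (S i k).attach,
      pderiv j (C (c ⟨i, k, some j'⟩) * X j'.1)
        = if j'.1 = j then C (c ⟨i, k, some j'⟩) else 0 := by
    intro j' _
    rw [pderiv_C_mul]
    by_cases h : j'.1 = j
    · rw [if_pos h, h, pderiv_X_self, mul_one]
    · rw [if_neg h, pderiv_X_of_ne h, mul_zero]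
  rw [Finset.sum_congr rfl h1, sum_attach_ite]
  by_cases h : j ∈ S i k <;> simp [entry, h]

lemma eval_pderiv (c : Var S → ℂ) (x : Fin n → ℂ) (i : Fin n) (j : Fin n) :
    eval x (pderiv j (linProdPoly d S c i))
      = ∑ k : Fin (d i),
          (∏ k' ∈ Finset.univ.erase k, Lval S c x i k') * entry S c i k j := by
  rw [linProdPoly, pderiv_finset_prod, map_sum]
  refine Finset.sum_congr rfl fun k _ => ?_
  rw [pderiv_factor, _root_.map_mul, eval_C, map_prod]
  congr 1
  exact Finset.prod_congr rfl fun k' _ => by simp [Lval]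


lemma exists_eval_ne_zero {p : MvPolynomial (Var S) ℂ} (h : p ≠ 0) :
    ∃ c : Var S → ℂ, eval c p ≠ 0 := by
  by_contra hc
  push_neg at hc
  exact h (MvPolynomial.funext fun x => by rw [hc x, map_zero])

lemma Amat_eq_of_eq_on_some (c c' : Var S → ℂ)
    (h : ∀ (i : Fin n) (k : Fin (d i)) (j : {j // j ∈ S i k}),
      c ⟨i, k, some j⟩ = c' ⟨i, k, some j⟩)
    (t : (i : Fin n) → Fin (d i)) : Amat S c t = Amat S c' t := by
  ext i j
  simp only [Amat, Matrix.of_apply]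
  split
  · exact h _ _ _
  · rfl

lemma xsol_eq_zero_of_bvec (c : Var S → ℂ) (t : (i : Fin n) → Fin (d i))
    (hb : bvec S c t = 0) : xsol S c t = 0 := by
  rw [xsol]
  have h : (fun i => -bvec S c t i) = (0 : Fin n → ℂ) := by
    ext i; rw [congrFun hb i]; simp
  rw [h]
  simp

noncomputable def Fpoly (t : (i : Fin n) → Fin (d i)) (i : Fin n) (k : Fin (d i)) :
    MvPolynomial (Var S) ℂ :=
  Dpoly S t * X ⟨i, k, none⟩ + ∑ j ∈ (S i k).attach, X ⟨i, k, some j⟩ * Npoly S t j.1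

lemma eval_Fpoly (c : Var S → ℂ) (t : (i : Fin n) → Fin (d i)) (i : Fin n) (k : Fin (d i)) :
    eval c (Fpoly S t i k) = (Amat S c t).det * c ⟨i, k, none⟩
      + ∑ j ∈ (S i k).attach,
          c ⟨i, k, some j⟩ * Matrix.cramer (Amat S c t) (fun i' => - bvec S c t i') j.1 := by
  simp only [Fpoly, map_add, _root_.map_mul, map_sum, eval_X, eval_Dpoly, eval_Npoly]

lemma eval_Fpoly_eq (c : Var S → ℂ) (t : (i : Fin n) → Fin (d i))
    (hdet : (Amat S c t).det ≠ 0) (i : Fin n) (k : Fin (d i)) :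
    eval c (Fpoly S t i k) = (Amat S c t).det * Lval S c (xsol S c t) i k := by
  have key : ∀ j ∈ (S i k).attach,
      c ⟨i, k, some j⟩ * Matrix.cramer (Amat S c t) (fun i' => - bvec S c t i') j.1
        = (Amat S c t).det * (c ⟨i, k, some j⟩ * xsol S c t j.1) := by
    intro j _
    have h : xsol S c t j.1
        = ((Amat S c t).det)⁻¹ * Matrix.cramer (Amat S c t) (fun i' => - bvec S c t i') j.1 := rfl
    rw [h]
    field_simp
  rw [eval_Fpoly, Finset.sum_congr rfl key, ← Finset.mul_sum, Lval]
  ring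

lemma Fpoly_ne_zero (t : (i : Fin n) → Fin (d i)) (ht : Hall S t) (i : Fin n) (k : Fin (d i))
    (hk : k ≠ t i) : Fpoly S t i k ≠ 0 := by
  obtain ⟨c1, hc1⟩ := exists_eval_ne_zero S (Dpoly_ne_zero S t ht)
  classical
  let c0 : Var S → ℂ := fun v => match v with
    | ⟨i', ⟨k', none⟩⟩ => if (⟨i', k'⟩ : Σ i : Fin n, Fin (d i)) = ⟨i, k⟩ then 1 else 0
    | ⟨i', ⟨k', some j⟩⟩ => c1 ⟨i', ⟨k', some j⟩⟩
  have hAeq : Amat S c0 t = Amat S c1 t := Amat_eq_of_eq_on_some S c0 c1 (fun _ _ _ => rfl) t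
  have hdet0 : (Amat S c0 t).det ≠ 0 := by rw [hAeq, ← eval_Dpoly]; exact hc1
  have hb : bvec S c0 t = 0 := by
    ext i'
    show (if (⟨i', t i'⟩ : Σ i : Fin n, Fin (d i)) = ⟨i, k⟩ then (1:ℂ) else 0) = 0
    rw [if_neg]
    intro he
    rw [Sigma.mk.inj_iff] at he
    obtain ⟨he1, he2⟩ := he
    subst he1
    exact hk (heq_iff_eq.mp he2).symm
  intro h0
  have := eval_Fpoly S c0 t i k
  rw [h0, map_zero] at this
  have hcr : ∀ j : Fin n,
      Matrix.cramer (Amat S c0 t) (fun i' => - bvec S c0 t i') j = 0 := by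
    intro j
    have h : (fun i' => - bvec S c0 t i') = (0 : Fin n → ℂ) := by
      ext i'; rw [congrFun hb i']; simp
    rw [h, map_zero]; rfl
  have hnone : c0 ⟨i, k, none⟩ = 1 := by
    show (if (⟨i, k⟩ : Σ i : Fin n, Fin (d i)) = ⟨i, k⟩ then (1:ℂ) else 0) = 1
    rw [if_pos rfl]
  rw [hnone, mul_one] at this
  have hsum : (∑ j ∈ (S i k).attach,
      c0 ⟨i, k, some j⟩ * Matrix.cramer (Amat S c0 t) (fun i' => - bvec S c0 t i') j.1) = 0 :=
    Finset.sum_eq_zero fun j _ => by rw [hcr j.1, mul_zero]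
  rw [hsum, add_zero] at this
  exact hdet0 this.symm

lemma eval_Qdiff (c : Var S → ℂ) (t t' : (i : Fin n) → Fin (d i))
    (hdet : (Amat S c t).det ≠ 0) (hdet' : (Amat S c t').det ≠ 0) (j : Fin n) :
    eval c (Dpoly S t' * Npoly S t j - Dpoly S t * Npoly S t' j)
      = (Amat S c t).det * (Amat S c t').det * (xsol S c t j - xsol S c t' j) := by
  simp only [map_sub, _root_.map_mul, eval_Dpoly, eval_Npoly]
  have h1 : xsol S c t j
      = ((Amat S c t).det)⁻¹ * Matrix.cramer (Amat S c t) (fun i' => - bvec S c t i') j := rfl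
  have h2 : xsol S c t' j
      = ((Amat S c t').det)⁻¹ * Matrix.cramer (Amat S c t') (fun i' => - bvec S c t' i') j := rfl
  rw [h1, h2]
  field_simp

lemma exists_Q (t t' : (i : Fin n) → Fin (d i)) (ht : Hall S t) (ht' : Hall S t')
    (hne : t ≠ t') :
    ∃ Q : MvPolynomial (Var S) ℂ, Q ≠ 0 ∧ ∀ c : Var S → ℂ, eval c Q ≠ 0 →
      (Amat S c t).det ≠ 0 → (Amat S c t').det ≠ 0 → xsol S c t ≠ xsol S c t' := by
  classical
  obtain ⟨i0, hi0⟩ := Function.ne_iff.mp hne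
  obtain ⟨c1, hc1⟩ := exists_eval_ne_zero S
    (mul_ne_zero (Dpoly_ne_zero S t ht) (Dpoly_ne_zero S t' ht'))
  rw [_root_.map_mul] at hc1
  have hd1 : eval c1 (Dpoly S t) ≠ 0 := fun h => hc1 (by rw [h, zero_mul])
  have hd1' : eval c1 (Dpoly S t') ≠ 0 := fun h => hc1 (by rw [h, mul_zero])
  let c0 : Var S → ℂ := fun v => match v with
    | ⟨i', ⟨k', none⟩⟩ => if (⟨i', k'⟩ : Σ i : Fin n, Fin (d i)) = ⟨i0, t i0⟩ then 1 else 0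
    | ⟨i', ⟨k', some j⟩⟩ => c1 ⟨i', ⟨k', some j⟩⟩
  have hAeq : Amat S c0 t = Amat S c1 t := Amat_eq_of_eq_on_some S c0 c1 (fun _ _ _ => rfl) t
  have hAeq' : Amat S c0 t' = Amat S c1 t' := Amat_eq_of_eq_on_some S c0 c1 (fun _ _ _ => rfl) t'
  have hdet0 : (Amat S c0 t).det ≠ 0 := by rw [hAeq, ← eval_Dpoly]; exact hd1
  have hdet0' : (Amat S c0 t').det ≠ 0 := by rw [hAeq', ← eval_Dpoly]; exact hd1'
  have hb' : bvec S c0 t' = 0 := by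
    ext i'
    show (if (⟨i', t' i'⟩ : Σ i : Fin n, Fin (d i)) = ⟨i0, t i0⟩ then (1:ℂ) else 0) = 0
    rw [if_neg]
    intro he
    rw [Sigma.mk.inj_iff] at he
    obtain ⟨he1, he2⟩ := he
    subst he1
    exact hi0 (heq_iff_eq.mp he2).symm
  have hx' : xsol S c0 t' = 0 := xsol_eq_zero_of_bvec S c0 t' hb'
  have hbt : bvec S c0 t i0 = 1 := by
    show (if (⟨i0, t i0⟩ : Σ i : Fin n, Fin (d i)) = ⟨i0, t i0⟩ then (1:ℂ) else 0) = 1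
    rw [if_pos rfl]
  have hx : xsol S c0 t ≠ 0 := by
    intro h
    have hm := mulVec_xsol S c0 t hdet0
    rw [h] at hm
    have : (0 : ℂ) = - bvec S c0 t i0 := by
      rw [← congrFun hm i0]; simp [Matrix.mulVec_zero]
    rw [hbt] at this
    norm_num at this
  have hxx : xsol S c0 t ≠ xsol S c0 t' := by rw [hx']; exact hx
  obtain ⟨j0, hj0⟩ := Function.ne_iff.mp hxx
  refine ⟨Dpoly S t' * Npoly S t j0 - Dpoly S t * Npoly S t' j0, ?_, ?_⟩
  · intro h0
    have := eval_Qdiff S c0 t t' hdet0 hdet0' j0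
    rw [h0, map_zero] at this
    have hsub : xsol S c0 t j0 - xsol S c0 t' j0 ≠ 0 := sub_ne_zero.mpr hj0
    exact (mul_ne_zero (mul_ne_zero hdet0 hdet0') hsub) this.symm
  · intro c hQ hdet hdet' hcontra
    rw [eval_Qdiff S c t t' hdet hdet' j0] at hQ
    rw [hcontra] at hQ
    simp at hQ


section Epart

variable (t : (i : Fin n) → Fin (d i)) (I J : Finset (Fin n))

/-- column function for the augmented minor -/
noncomputable def colf (i : {x // x ∈ I}) (o : Option {x // x ∈ J}) :
    MvPolynomial (Var S) ℂ :=
  match o with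
  | none => X ⟨i.1, t i.1, none⟩
  | some j => if h : j.1 ∈ S i.1 (t i.1) then X ⟨i.1, t i.1, some ⟨j.1, h⟩⟩ else 0

noncomputable def Emat (e : {x // x ∈ I} ≃ Option {x // x ∈ J}) :
    Matrix {x // x ∈ I} {x // x ∈ I} (MvPolynomial (Var S) ℂ) :=
  Matrix.of fun i i' => colf S t I J i (e i')

lemma sum_attach_dite {s u : Finset (Fin n)} (hsu : s ⊆ u) (f : (j : Fin n) → j ∈ s → ℂ) :
    (∑ j ∈ u.attach, if h : j.1 ∈ s then f j.1 h else 0) = ∑ j ∈ s.attach, f j.1 j.2 := by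
  rw [Finset.sum_attach u (fun j => if h : j ∈ s then f j h else 0)]
  rw [← Finset.sum_subset hsu (fun x _ hx => dif_neg hx)]
  rw [← Finset.sum_attach s (fun j => if h : j ∈ s then f j h else 0)]
  exact Finset.sum_congr rfl fun j _ => dif_pos j.2

lemma Emat_mulVec (hSJ : ∀ i ∈ I, S i (t i) ⊆ J)
    (e : {x // x ∈ I} ≃ Option {x // x ∈ J}) (c : Var S → ℂ) (x : Fin n → ℂ)
    (i : {x // x ∈ I}) :
    (((Emat S t I J e).map (eval c)) *ᵥ
      (fun i' => Option.elim (e i') 1 (fun j => x j.1))) i = Lval S c x i.1 (t i.1) := by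
  classical
  rw [Matrix.mulVec, dotProduct]
  have h1 : ∀ i' : {x // x ∈ I},
      ((Emat S t I J e).map (eval c)) i i' * Option.elim (e i') 1 (fun j => x j.1)
        = (fun o : Option {x // x ∈ J} =>
            eval c (colf S t I J i o) * Option.elim o 1 (fun j => x j.1)) (e i') := fun i' => rfl
  rw [Finset.sum_congr rfl (fun i' _ => h1 i')]
  rw [Equiv.sum_comp e (fun o : Option {x // x ∈ J} =>
    eval c (colf S t I J i o) * Option.elim o 1 (fun j => x j.1))]
  rw [Fintype.sum_option]
  have h2 : eval c (colf S t I J i none) * Option.elim (none : Option {x // x ∈ J}) 1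
      (fun j => x j.1) = c ⟨i.1, t i.1, none⟩ := by
    show eval c (X ⟨i.1, t i.1, none⟩) * 1 = _
    rw [eval_X, mul_one]
  have h3 : ∀ j : {x // x ∈ J},
      eval c (colf S t I J i (some j)) * Option.elim (some j) 1 (fun j => x j.1)
        = if h : j.1 ∈ S i.1 (t i.1) then c ⟨i.1, t i.1, some ⟨j.1, h⟩⟩ * x j.1 else 0 := by
    intro j
    show eval c (if h : j.1 ∈ S i.1 (t i.1) then X ⟨i.1, t i.1, some ⟨j.1, h⟩⟩ else 0) * x j.1 = _
    by_cases h : j.1 ∈ S i.1 (t i.1)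
    · rw [dif_pos h, dif_pos h, eval_X]
    · rw [dif_neg h, dif_neg h, map_zero, zero_mul]
  rw [h2, Finset.sum_congr rfl (fun j _ => h3 j)]
  rw [show (Finset.univ : Finset {x // x ∈ J}) = J.attach from rfl]
  rw [sum_attach_dite (hSJ i.1 i.2) (fun j hj => c ⟨i.1, t i.1, some ⟨j, hj⟩⟩ * x j)]
  rw [Lval, add_comm]

/-- if the minor's evaluation is nonsingular, the row equations have no common solution -/
lemma no_solution_of_Emat (hSJ : ∀ i ∈ I, S i (t i) ⊆ J)
    (e : {x // x ∈ I} ≃ Option {x // x ∈ J}) (c : Var S → ℂ)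
    (hdet : eval c (Emat S t I J e).det ≠ 0) (x : Fin n → ℂ)
    (hx : ∀ i, Lval S c x i (t i) = 0) : False := by
  classical
  have hdet' : ((Emat S t I J e).map (eval c)).det ≠ 0 := by
    rw [← RingHom.mapMatrix_apply, ← RingHom.map_det]
    exact hdet
  have hmv : ((Emat S t I J e).map (eval c)) *ᵥ
      (fun i' => Option.elim (e i') 1 (fun j => x j.1)) = 0 := by
    ext i
    rw [Emat_mulVec S t I J hSJ e c x i]
    exact hx i.1
  have hy := Matrix.eq_zero_of_mulVec_eq_zero hdet' hmv
  have h1 := congrFun hy (e.symm none)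
  rw [Equiv.apply_symm_apply] at h1
  exact one_ne_zero (h1.trans rfl)

end Epart

lemma exists_E (t : (i : Fin n) → Fin (d i)) (ht : ¬ Hall S t) :
    ∃ E : MvPolynomial (Var S) ℂ, E ≠ 0 ∧ ∀ c : Var S → ℂ, eval c E ≠ 0 →
      ∀ x : Fin n → ℂ, ¬ ∀ i, Lval S c x i (t i) = 0 := by
  classical
  rw [Hall] at ht
  push_neg at ht
  obtain ⟨I0, hI0⟩ := ht
  -- pick a minimal violating set
  have hV : (Finset.univ.filter
      (fun I : Finset (Fin n) => ((I.biUnion fun i => S i (t i)).card < I.card))).Nonempty :=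
    ⟨I0, Finset.mem_filter.mpr ⟨Finset.mem_univ _, hI0⟩⟩
  obtain ⟨I, hIV, hImin⟩ := Finset.exists_min_image _ Finset.card hV
  rw [Finset.mem_filter] at hIV
  have hIviol := hIV.2
  set J := I.biUnion fun i => S i (t i) with hJ
  have hmin : ∀ I' : Finset (Fin n),
      ((I'.biUnion fun i => S i (t i)).card < I'.card) → I.card ≤ I'.card := fun I' h =>
    hImin I' (Finset.mem_filter.mpr ⟨Finset.mem_univ _, h⟩)
  -- |I| = |J| + 1
  have hIne : I.Nonempty := Finset.card_pos.mp (lt_of_le_of_lt (Nat.zero_le _) hIviol)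
  obtain ⟨a, ha⟩ := hIne
  have hstep : I.card - 1 ≤ J.card := by
    by_contra hcon
    push_neg at hcon
    have h1 : ((I.erase a).biUnion fun i => S i (t i)).card < (I.erase a).card := by
      have hsub : ((I.erase a).biUnion fun i => S i (t i)) ⊆ J :=
        Finset.biUnion_subset_biUnion_of_subset_left _ (Finset.erase_subset a I)
      have := Finset.card_le_card hsub
      rw [Finset.card_erase_of_mem ha]
      omega
    have := hmin _ h1
    rw [Finset.card_erase_of_mem ha] at this
    have hc1 : 1 ≤ I.card := Finset.card_pos.mpr ⟨a, ha⟩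
    omega
  have hcard : I.card = J.card + 1 := by omega
  -- the equivalence between rows and columns
  have hcards : Fintype.card {x // x ∈ I} = Fintype.card (Option {x // x ∈ J}) := by
    rw [Fintype.card_coe, Fintype.card_option, Fintype.card_coe, hcard]
  let e : {x // x ∈ I} ≃ Option {x // x ∈ J} := Fintype.equivOfCardEq hcards
  have hSJ : ∀ i ∈ I, S i (t i) ⊆ J := fun i hi j hj => Finset.mem_biUnion.mpr ⟨i, hi, hj⟩
  refine ⟨(Emat S t I J e).det, ?_, ?_⟩
  · -- nonzero: build an SDR and evaluate at the corresponding 0-1 point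
    -- the allowed-columns function
    let emb : (i : {x // x ∈ I}) → ({j // j ∈ S i.1 (t i.1)} ↪ Option {x // x ∈ J}) := fun i =>
      ⟨fun j => some ⟨j.1, hSJ i.1 i.2 j.2⟩, fun j j' hjj => by
        simp only [Option.some.injEq, Subtype.mk.injEq] at hjj
        exact Subtype.ext hjj⟩
    let T : {x // x ∈ I} → Finset (Option {x // x ∈ J}) := fun i =>
      insert none (((S i.1 (t i.1)).attach).map (emb i))
    have hHall : ∀ s : Finset {x // x ∈ I}, s.card ≤ (s.biUnion T).card := by
      intro s
      rcases s.eq_empty_or_nonempty with hs | hs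
      · simp [hs]
      -- image of s in Fin n
      set I' := s.image Subtype.val with hI'
      have hI'sub : I' ⊆ I := by
        intro j hj
        rw [hI', Finset.mem_image] at hj
        obtain ⟨i, _, rfl⟩ := hj
        exact i.2
      have hI'card : I'.card = s.card := Finset.card_image_of_injective _ Subtype.val_injective
      set B := I'.biUnion fun i => S i (t i) with hB
      have hBJ : B ⊆ J := Finset.biUnion_subset_biUnion_of_subset_left _ hI'sub
      -- lower bound for the biUnion of allowed columns
      let u : Fin n → Option {x // x ∈ J} := fun j => if h : j ∈ J then some ⟨j, h⟩ else none
      have hsub2 : insert none (B.image u) ⊆ s.biUnion T := by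
        intro o ho
        rw [Finset.mem_insert] at ho
        rcases ho with rfl | ho
        · obtain ⟨i, hi⟩ := hs
          exact Finset.mem_biUnion.mpr ⟨i, hi, Finset.mem_insert_self _ _⟩
        · rw [Finset.mem_image] at ho
          obtain ⟨j, hjB, rfl⟩ := ho
          rw [hB, Finset.mem_biUnion] at hjB
          obtain ⟨i', hi'I', hjS⟩ := hjB
          rw [hI', Finset.mem_image] at hi'I'
          obtain ⟨i, his, rfl⟩ := hi'I'
          refine Finset.mem_biUnion.mpr ⟨i, his, ?_⟩
          refine Finset.mem_insert.mpr (Or.inr ?_)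
          rw [Finset.mem_map]
          refine ⟨⟨j, hjS⟩, Finset.mem_attach _ _, ?_⟩
          have hjJ : j ∈ J := hSJ i.1 i.2 hjS
          show some ⟨j, _⟩ = u j
          rw [show u j = some ⟨j, hjJ⟩ from dif_pos hjJ]
      -- now count
      have hnone : (none : Option {x // x ∈ J}) ∉ B.image u := by
        rw [Finset.mem_image]
        rintro ⟨j, hjB, hju⟩
        have hjJ : j ∈ J := hBJ hjB
        rw [show u j = some ⟨j, hjJ⟩ from dif_pos hjJ] at hju
        exact nomatch hju
      have hinj : Set.InjOn u B := by
        intro j hj j' hj' he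
        have hjJ : j ∈ J := hBJ hj
        have hjJ' : j' ∈ J := hBJ hj'
        rw [show u j = some ⟨j, hjJ⟩ from dif_pos hjJ,
          show u j' = some ⟨j', hjJ'⟩ from dif_pos hjJ'] at he
        simpa using he
      have hcard2 : (insert none (B.image u)).card = B.card + 1 := by
        rw [Finset.card_insert_of_notMem hnone, Finset.card_image_of_injOn hinj]
      have hle := Finset.card_le_card hsub2
      by_cases hII : I' = I
      · have hBJeq : B = J := by rw [hB, hII, hJ]
        have : s.card = J.card + 1 := by rw [← hI'card, hII, hcard]
        have hBc : B.card = J.card := by rw [hBJeq]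
        omega
      · have hlt : I'.card < I.card := lt_of_le_of_ne (Finset.card_le_card hI'sub)
          (fun he => hII (Finset.eq_of_subset_of_card_le hI'sub (le_of_eq he.symm)))
        have hnv : ¬ (B.card < I'.card) := fun hc => absurd (hmin I' hc) (by omega)
        omega
    -- obtain an SDR
    obtain ⟨σ, hσinj, hσmem⟩ :=
      (Finset.all_card_le_biUnion_card_iff_exists_injective T).mp hHall
    have hσbij : Function.Bijective σ :=
      (Fintype.bijective_iff_injective_and_card σ).mpr ⟨hσinj, hcards⟩
    let σe := Equiv.ofBijective σ hσbij
    let π : Equiv.Perm {x // x ∈ I} := σe.trans e.symm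
    let cstar : Var S → ℂ := fun v => match v with
      | ⟨i', ⟨k', w⟩⟩ =>
        if h : i' ∈ I ∧ k' = t i' then
          (if Option.map Subtype.val w = Option.map Subtype.val (σ ⟨i', h.1⟩) then 1 else 0)
        else 0
    have hre : ∀ i i' : {x // x ∈ I}, (i' = π i ↔ e i' = σ i) := by
      intro i i'
      constructor
      · rintro rfl
        show e (e.symm (σ i)) = σ i
        rw [Equiv.apply_symm_apply]
      · intro h
        show i' = e.symm (σ i)
        rw [← h, Equiv.symm_apply_apply]
    have hM : (Emat S t I J e).map (eval cstar)
        = Matrix.of fun i i' => if i' = π i then (1:ℂ) else 0 := by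
      ext i i'
      show eval cstar (colf S t I J i (e i')) = _
      rcases he : e i' with _ | j
      · show eval cstar (X ⟨i.1, t i.1, none⟩) = _
        rw [eval_X]
        show (if h : i.1 ∈ I ∧ t i.1 = t i.1 then
            (if Option.map Subtype.val (none : Option {j // j ∈ S i.1 (t i.1)})
              = Option.map Subtype.val (σ ⟨i.1, h.1⟩) then (1:ℂ) else 0) else 0) = _
        rw [dif_pos ⟨i.2, rfl⟩]
        have : (⟨i.1, i.2⟩ : {x // x ∈ I}) = i := rfl
        rw [this]
        rw [Matrix.of_apply]
        by_cases hσn : σ i = none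
        · rw [hσn]
          rw [if_pos (by rfl), if_pos ((hre i i').mpr (by rw [he, hσn]))]
        · obtain ⟨j', hj'⟩ := Option.ne_none_iff_exists'.mp hσn
          rw [hj']
          rw [if_neg (by simp), if_neg (fun hc => by
            have := (hre i i').mp hc
            rw [he, hj'] at this
            exact nomatch this)]
      · show eval cstar (if h : j.1 ∈ S i.1 (t i.1)
            then X ⟨i.1, t i.1, some ⟨j.1, h⟩⟩ else 0) = _
        rw [Matrix.of_apply]
        by_cases hjS : j.1 ∈ S i.1 (t i.1)
        · rw [dif_pos hjS, eval_X]
          show (if h : i.1 ∈ I ∧ t i.1 = t i.1 then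
              (if Option.map Subtype.val (some (⟨j.1, hjS⟩ : {j // j ∈ S i.1 (t i.1)}))
                = Option.map Subtype.val (σ ⟨i.1, h.1⟩) then (1:ℂ) else 0) else 0) = _
          rw [dif_pos ⟨i.2, rfl⟩]
          have : (⟨i.1, i.2⟩ : {x // x ∈ I}) = i := rfl
          rw [this]
          rcases hσc : σ i with _ | j'
          · rw [if_neg (by simp), if_neg (fun hc => by
              have := (hre i i').mp hc
              rw [he, hσc] at this
              exact nomatch this)]
          · by_cases hjj : j.1 = j'.1
            · rw [if_pos (by simp [hjj]), if_pos ((hre i i').mpr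
                (by rw [he, hσc]; exact congrArg some (Subtype.ext hjj)))]
            · rw [if_neg (by simp [hjj]), if_neg (fun hc => by
                have := (hre i i').mp hc
                rw [he, hσc] at this
                exact hjj (congrArg Subtype.val (Option.some.inj this)))]
        · rw [dif_neg hjS, map_zero]
          rw [if_neg (fun hc => by
            have hσi := (hre i i').mp hc
            rw [he] at hσi
            have hmem := hσmem i
            rw [← hσi] at hmem
            rw [Finset.mem_insert] at hmem
            rcases hmem with hmem | hmem
            · exact nomatch hmem
            · rw [Finset.mem_map] at hmem
              obtain ⟨j'', _, hj''⟩ := hmem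
              have : j''.1 = j.1 := congrArg Subtype.val (Option.some.inj hj'')
              exact hjS (this ▸ j''.2))]
    have hdetne : eval cstar (Emat S t I J e).det ≠ 0 := by
      rw [RingHom.map_det, RingHom.mapMatrix_apply, hM]
      exact det_ite_ne_zero π
    exact fun h0 => hdetne (by rw [h0, map_zero])
  · intro c hE x hx
    exact no_solution_of_Emat S t I J hSJ e c hE x hx

open Classical in
noncomputable def Gt (t : (i : Fin n) → Fin (d i)) : MvPolynomial (Var S) ℂ :=
  if h : Hall S t then Dpoly S t * ∏ i : Fin n, ∏ k ∈ Finset.univ.erase (t i), Fpoly S t i k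
  else (exists_E S t h).choose

open Classical in
noncomputable def Qp (t t' : (i : Fin n) → Fin (d i)) : MvPolynomial (Var S) ℂ :=
  if h : Hall S t ∧ Hall S t' ∧ t ≠ t' then (exists_Q S t t' h.1 h.2.1 h.2.2).choose else 1

lemma Gt_ne_zero (t : (i : Fin n) → Fin (d i)) : Gt S t ≠ 0 := by
  rw [Gt]
  by_cases h : Hall S t
  · rw [dif_pos h]
    refine mul_ne_zero (Dpoly_ne_zero S t h) ?_
    rw [Finset.prod_ne_zero_iff]
    intro i _
    rw [Finset.prod_ne_zero_iff]
    intro k hk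
    exact Fpoly_ne_zero S t h i k (Finset.ne_of_mem_erase hk)
  · rw [dif_neg h]
    exact (exists_E S t h).choose_spec.1

lemma Qp_ne_zero (t t' : (i : Fin n) → Fin (d i)) : Qp S t t' ≠ 0 := by
  rw [Qp]
  by_cases h : Hall S t ∧ Hall S t' ∧ t ≠ t'
  · rw [dif_pos h]
    exact (exists_Q S t t' h.1 h.2.1 h.2.2).choose_spec.1
  · rw [dif_neg h]
    exact one_ne_zero

lemma det_of_Gt (c : Var S → ℂ) (t : (i : Fin n) → Fin (d i)) (h : Hall S t)
    (h2 : eval c (Gt S t) ≠ 0) : (Amat S c t).det ≠ 0 := by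
  rw [Gt, dif_pos h, _root_.map_mul] at h2
  rw [← eval_Dpoly]
  exact fun h0 => h2 (by rw [h0, zero_mul])

lemma F_of_Gt (c : Var S → ℂ) (t : (i : Fin n) → Fin (d i)) (h : Hall S t)
    (h2 : eval c (Gt S t) ≠ 0) (i : Fin n) (k : Fin (d i)) (hk : k ≠ t i) :
    eval c (Fpoly S t i k) ≠ 0 := by
  rw [Gt, dif_pos h, _root_.map_mul, map_prod] at h2
  intro h0
  apply h2
  rw [mul_eq_zero]
  right
  refine Finset.prod_eq_zero (Finset.mem_univ i) ?_
  rw [map_prod]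
  exact Finset.prod_eq_zero (Finset.mem_erase.mpr ⟨hk, Finset.mem_univ k⟩) h0

lemma nosol_of_Gt (c : Var S → ℂ) (t : (i : Fin n) → Fin (d i)) (h : ¬ Hall S t)
    (h2 : eval c (Gt S t) ≠ 0) (x : Fin n → ℂ) : ¬ ∀ i, Lval S c x i (t i) = 0 := by
  rw [Gt, dif_neg h] at h2
  exact (exists_E S t h).choose_spec.2 c h2 x

lemma xsol_ne_of_Qp (c : Var S → ℂ) (t t' : (i : Fin n) → Fin (d i)) (ht : Hall S t)
    (ht' : Hall S t') (hne : t ≠ t') (hQ : eval c (Qp S t t') ≠ 0)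
    (hdet : (Amat S c t).det ≠ 0) (hdet' : (Amat S c t').det ≠ 0) :
    xsol S c t ≠ xsol S c t' := by
  rw [Qp, dif_pos ⟨ht, ht', hne⟩] at hQ
  exact (exists_Q S t t' ht ht' hne).choose_spec.2 c hQ hdet hdet'

end LPS

/-- Except for a choice of coefficients belonging to an algebraic set, a random
linear-product system based on the set structure `S` has exactly `B_S` regular
solutions, where `B_S` counts choices of one set from each row of `S`
satisfying Hall's condition. -/
theorem linear_product_start_system_generic_regular_solutions
    (n : ℕ) (d : Fin n → ℕ) (S : (i : Fin n) → Fin (d i) → Finset (Fin n)) :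
    ∃ G : MvPolynomial (Σ i : Fin n, Σ k : Fin (d i), Option {j // j ∈ S i k}) ℂ,
      G ≠ 0 ∧
      ∀ c : (Σ i : Fin n, Σ k : Fin (d i), Option {j // j ∈ S i k}) → ℂ,
        MvPolynomial.eval c G ≠ 0 →
        (Set.Finite {x : Fin n → ℂ | ∀ i, MvPolynomial.eval x (linProdPoly d S c i) = 0}) ∧
        Set.ncard {x : Fin n → ℂ | ∀ i, MvPolynomial.eval x (linProdPoly d S c i) = 0}
          = Set.ncard {t : (i : Fin n) → Fin (d i) |
              ∀ I : Finset (Fin n), I.card ≤ (I.biUnion (fun i => S i (t i))).card} ∧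
        ∀ x : Fin n → ℂ, (∀ i, MvPolynomial.eval x (linProdPoly d S c i) = 0) →
          IsUnit (Matrix.of fun i j =>
            MvPolynomial.eval x (MvPolynomial.pderiv j (linProdPoly d S c i))).det := by
  classical
  refine ⟨(∏ t : (i : Fin n) → Fin (d i), LPS.Gt S t)
    * ∏ t : (i : Fin n) → Fin (d i), ∏ t' : (i : Fin n) → Fin (d i), LPS.Qp S t t', ?_, ?_⟩
  · refine mul_ne_zero ?_ ?_
    · rw [Finset.prod_ne_zero_iff]
      exact fun t _ => LPS.Gt_ne_zero S t
    · rw [Finset.prod_ne_zero_iff]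
      intro t _
      rw [Finset.prod_ne_zero_iff]
      exact fun t' _ => LPS.Qp_ne_zero S t t'
  · intro c hG
    rw [_root_.map_mul] at hG
    have hGt : ∀ t, MvPolynomial.eval c (LPS.Gt S t) ≠ 0 := by
      intro t h0
      apply hG
      rw [mul_eq_zero]
      left
      rw [map_prod]
      exact Finset.prod_eq_zero (Finset.mem_univ t) h0
    have hQp : ∀ t t', MvPolynomial.eval c (LPS.Qp S t t') ≠ 0 := by
      intro t t' h0
      apply hG
      rw [mul_eq_zero]
      right
      rw [map_prod]
      refine Finset.prod_eq_zero (Finset.mem_univ t) ?_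
      rw [map_prod]
      exact Finset.prod_eq_zero (Finset.mem_univ t') h0
    have hdet : ∀ t, LPS.Hall S t → (LPS.Amat S c t).det ≠ 0 :=
      fun t h => LPS.det_of_Gt S c t h (hGt t)
    -- key decomposition of solutions
    have key : ∀ x : Fin n → ℂ, (∀ i, MvPolynomial.eval x (linProdPoly d S c i) = 0) →
        ∃ t, LPS.Hall S t ∧ x = LPS.xsol S c t ∧ ∀ i, LPS.Lval S c x i (t i) = 0 := by
      intro x hx
      have hex : ∀ i, ∃ k, LPS.Lval S c x i k = 0 := by
        intro i
        have := hx i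
        rw [LPS.eval_linProdPoly, Finset.prod_eq_zero_iff] at this
        obtain ⟨k, _, hk⟩ := this
        exact ⟨k, hk⟩
      choose t ht using hex
      have hHall : LPS.Hall S t := by
        by_contra h
        exact LPS.nosol_of_Gt S c t h (hGt t) x ht
      exact ⟨t, hHall, LPS.eq_xsol S c t (hdet t hHall) ht, ht⟩
    have himg : {x : Fin n → ℂ | ∀ i, MvPolynomial.eval x (linProdPoly d S c i) = 0}
        = (fun t => LPS.xsol S c t) '' {t : (i : Fin n) → Fin (d i) | LPS.Hall S t} := by
      ext x
      constructor
      · intro hx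
        obtain ⟨t, h1, h2, _⟩ := key x hx
        exact ⟨t, h1, h2.symm⟩
      · rintro ⟨t, h1, rfl⟩
        intro i
        rw [LPS.eval_linProdPoly]
        exact Finset.prod_eq_zero (Finset.mem_univ (t i))
          (LPS.xsol_isSolution S c t (hdet t h1) i)
    have hinj : Set.InjOn (fun t => LPS.xsol S c t)
        {t : (i : Fin n) → Fin (d i) | LPS.Hall S t} := by
      intro t h1 t' h1' he
      by_contra hne
      exact LPS.xsol_ne_of_Qp S c t t' h1 h1' hne (hQp t t') (hdet t h1) (hdet t' h1') he
    refine ⟨?_, ?_, ?_⟩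
    · rw [himg]
      exact Set.Finite.image _ (Set.toFinite _)
    · rw [himg]
      exact Set.ncard_image_of_injOn hinj
    · -- regularity
      intro x hx
      obtain ⟨t, hHt, hxe, hL⟩ := key x hx
      set u : Fin n → ℂ := fun i => ∏ k ∈ Finset.univ.erase (t i), LPS.Lval S c x i k with hu
      have hune : ∀ i, u i ≠ 0 := by
        intro i
        rw [hu, Finset.prod_ne_zero_iff]
        intro k hk
        have hkne : k ≠ t i := Finset.ne_of_mem_erase hk
        have hF := LPS.F_of_Gt S c t hHt (hGt t) i k hkne
        rw [LPS.eval_Fpoly_eq S c t (hdet t hHt) i k] at hF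
        rw [hxe]
        exact fun h0 => hF (by rw [h0, mul_zero])
      have hJac : (Matrix.of fun i j =>
          MvPolynomial.eval x (MvPolynomial.pderiv j (linProdPoly d S c i)))
            = Matrix.diagonal u * LPS.Amat S c t := by
        ext i j
        rw [Matrix.of_apply, LPS.eval_pderiv, Matrix.diagonal_mul]
        rw [Finset.sum_eq_single (t i)]
        · rw [LPS.Amat_entry]
        · intro k _ hkne
          have hti : t i ∈ Finset.univ.erase k :=
            Finset.mem_erase.mpr ⟨fun h => hkne h.symm, Finset.mem_univ _⟩
          rw [Finset.prod_eq_zero hti (hL i), zero_mul]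
        · intro h
          exact absurd (Finset.mem_univ (t i)) h
      rw [hJac, Matrix.det_mul, Matrix.det_diagonal]
      rw [isUnit_iff_ne_zero]
      exact mul_ne_zero (Finset.prod_ne_zero_iff.mpr fun i _ => hune i) (hdet t hHt)
end
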